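/- Let ρ⁰(z,w) := −1 + |z|² + |w|², let ρ′ : ℂ² → ℝ be smooth, and for ε ∈ ℝ set ρ^ε := ρ⁰ + ε ρ′. Then for every point p ∈ ℂ²: (a) det A₃(ρ⁰)(p) = 0; (b) the function ε ↦ det A₃(ρ^ε)(p) is differentiable at ε = 0 with derivative equal to det D₃(ρ⁰)(p) · Q⁰(ρ′)(p); and (c) the polynomial c₀ := det D₃(ρ⁰) does not vanish at any point of the unit sphere S³ = {ρ⁰ = 0}. Consequently det A₃(ρ^ε)(p) = c₀(p)·Q⁰(ρ′)(p)·ε + O(ε²). -/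

import Mathlib

noncomputable section

open Complex Matrix Set

/-- Wirtinger derivative `∂/∂z` (first coordinate) of `f : ℂ × ℂ → ℂ`. -/
def wdz (f : ℂ × ℂ → ℂ) (p : ℂ × ℂ) : ℂ :=
  (fderiv ℝ f p (1, 0) - Complex.I * fderiv ℝ f p (Complex.I, 0)) / 2

/-- Wirtinger derivative `∂/∂z̄` (first coordinate). -/
def wdzb (f : ℂ × ℂ → ℂ) (p : ℂ × ℂ) : ℂ :=
  (fderiv ℝ f p (1, 0) + Complex.I * fderiv ℝ f p (Complex.I, 0)) / 2

/-- Wirtinger derivative `∂/∂w` (second coordinate). -/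
def wdw (f : ℂ × ℂ → ℂ) (p : ℂ × ℂ) : ℂ :=
  (fderiv ℝ f p (0, 1) - Complex.I * fderiv ℝ f p (0, Complex.I)) / 2

/-- Wirtinger derivative `∂/∂w̄` (second coordinate). -/
def wdwb (f : ℂ × ℂ → ℂ) (p : ℂ × ℂ) : ℂ :=
  (fderiv ℝ f p (0, 1) + Complex.I * fderiv ℝ f p (0, Complex.I)) / 2

/-- The operator `L := -ρ_w ∂_z + ρ_z ∂_w` associated with `ρ`. -/
def Lop (ρ f : ℂ × ℂ → ℂ) : ℂ × ℂ → ℂ :=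
  fun p => -(wdw ρ p) * wdz f p + wdz ρ p * wdw f p

/-- The operator `L̄ := -ρ_w̄ ∂_z̄ + ρ_z̄ ∂_w̄` associated with `ρ`. -/
def Lbar (ρ f : ℂ × ℂ → ℂ) : ℂ × ℂ → ℂ :=
  fun p => -(wdwb ρ p) * wdzb f p + wdzb ρ p * wdwb f p

/-- The function `ρ_{Z²}(L,L) = ρ_zz ρ_w² - 2 ρ_zw ρ_z ρ_w + ρ_ww ρ_z²`. -/
def rhoZ2LL (ρ : ℂ × ℂ → ℂ) : ℂ × ℂ → ℂ :=
  fun p => wdz (wdz ρ) p * (wdw ρ p) ^ 2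
    - 2 * wdw (wdz ρ) p * wdz ρ p * wdw ρ p
    + wdw (wdw ρ) p * (wdz ρ p) ^ 2

/-- The row functions of the matrix `A_n(ρ)`: for `i ≤ n` the monomial `ρ_z^i ρ_w^{n-i}`,
and for `i = n + 1 + s` (with `0 ≤ s ≤ n - 3`) the function `ρ_z^s ρ_w^{n-3-s} ρ_{Z²}(L,L)`. -/
def rowA (ρ : ℂ × ℂ → ℂ) (n i : ℕ) : ℂ × ℂ → ℂ :=
  if i ≤ n then fun p => (wdz ρ p) ^ i * (wdw ρ p) ^ (n - i)
  else fun p => (wdz ρ p) ^ (i - (n + 1)) * (wdw ρ p) ^ (n - 3 - (i - (n + 1))) * rhoZ2LL ρ p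

/-- The `(2n-1) × (2n-1)` matrix `A_n(ρ)` at the point `p`; the `(i,j)` entry is
`L̄^j` applied to the `i`-th row function, evaluated at `p`. -/
def matA (ρ : ℂ × ℂ → ℂ) (n : ℕ) (p : ℂ × ℂ) :
    Matrix (Fin (2 * n - 1)) (Fin (2 * n - 1)) ℂ :=
  fun i j => (Lbar ρ)^[(j : ℕ)] (rowA ρ n (i : ℕ)) p

/-- The `(n+1) × (n+1)` matrix `D_n(ρ) = (L̄^j (ρ_z^k ρ_w^{n-k}))_{0 ≤ j,k ≤ n}` at `p`. -/
def matD (ρ : ℂ × ℂ → ℂ) (n : ℕ) (p : ℂ × ℂ) : Matrix (Fin (n + 1)) (Fin (n + 1)) ℂ :=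
  fun k j => (Lbar ρ)^[(j : ℕ)] (fun q => (wdz ρ q) ^ (k : ℕ) * (wdw ρ q) ^ (n - (k : ℕ))) p

/-- The determinant of the complex Jacobian matrix of a map `H : ℂ² → ℂ²`
(computed via Wirtinger derivatives of the two components). -/
def detJac (H : ℂ × ℂ → ℂ × ℂ) (p : ℂ × ℂ) : ℂ :=
  wdz (fun q => (H q).1) p * wdw (fun q => (H q).2) p
    - wdw (fun q => (H q).1) p * wdz (fun q => (H q).2) p

/-- The operator `L̄₀ := -w ∂_z̄ + z ∂_w̄` (the operator `L̄` of the sphere). -/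
def Lbar0 (f : ℂ × ℂ → ℂ) : ℂ × ℂ → ℂ :=
  fun p => -p.2 * wdzb f p + p.1 * wdwb f p

/-- `Q⁰(R) := L̄₀⁴ ( w̄² R_zz - 2 z̄ w̄ R_zw + z̄² R_ww )`. -/
def Q0 (R : ℂ × ℂ → ℂ) : ℂ × ℂ → ℂ :=
  Lbar0^[4] (fun p => (starRingEnd ℂ p.2) ^ 2 * wdz (wdz R) p
    - 2 * starRingEnd ℂ p.1 * starRingEnd ℂ p.2 * wdw (wdz R) p
    + (starRingEnd ℂ p.1) ^ 2 * wdw (wdw R) p)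

/-- The defining function of the unit sphere: `ρ⁰(z,w) = -1 + |z|² + |w|²`. -/
def rho0 : ℂ × ℂ → ℂ := fun Z => -1 + Z.1 * starRingEnd ℂ Z.1 + Z.2 * starRingEnd ℂ Z.2

/-!
Since `ρ⁰` is a real quadric, its holomorphic Hessian vanishes, so for `ρ^ε = ρ⁰ + ε ρ'` we get
`ρ^ε_{Z²}(L,L) = ε · ρ'_{Z²}(L,L)`, and the last row of `A₃(ρ^ε)` is `ε` times a row depending
smoothly on `ε`. Thus `det A₃(ρ^ε) = ε · det B(ε)` with `B` continuous, which gives (a) and the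
derivative `det B(0)`. At `ε = 0` we have `L̄ = L̄₀`, which acts on polynomials in
`(z, w, z̄, w̄)` as the derivation `-w ∂_z̄ + z ∂_w̄`; it kills `z, w` and lowers the degree in
`(z̄, w̄)`, so `L̄₀⁴` annihilates the cubic monomials `z̄^k w̄^{3-k}`. Hence `B(0)` is block lower
triangular and `det B(0) = det D₃(ρ⁰) · Q⁰(ρ')`. The same polynomial calculus gives
`det D₃(ρ⁰) = 12 (|z|² + |w|²)⁶`, which is `12` on the sphere.
-/

open MvPolynomial ComplexConjugate
open scoped ContDiff

theorem Matrix.det_updateRow_last_of_col_eq_zero {R : Type*} [CommRing R] {n : ℕ}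
    (M : Matrix (Fin (n + 1)) (Fin (n + 1)) R) (v : Fin (n + 1) → R)
    (h : ∀ i : Fin n, M i.castSucc (Fin.last n) = 0) :
    (M.updateRow (Fin.last n) v).det =
      (M.submatrix Fin.castSucc Fin.castSucc).det * v (Fin.last n) := by
  have hsub : (M.updateRow (Fin.last n) v).submatrix Fin.castSucc Fin.castSucc =
      M.submatrix Fin.castSucc Fin.castSucc := by
    ext i j
    exact congrFun (updateRow_ne (Fin.castSucc_lt_last i).ne) _
  rw [det_succ_column _ (Fin.last n), Finset.sum_eq_single (Fin.last n)]
  · simp [Fin.succAbove_last, ← two_mul, hsub, mul_comm]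
  · intro i _ hi
    obtain ⟨i, rfl⟩ := Fin.exists_castSucc_eq.mpr hi
    simp [h]
  · simp

theorem hasDerivAt_smul_of_continuousAt {E : Type*} [NormedAddCommGroup E] [NormedSpace ℝ E]
    {g : ℝ → E} (hg : ContinuousAt g 0) : HasDerivAt (fun ε => ε • g ε) (g 0) 0 := by
  rw [hasDerivAt_iff_tendsto_slope]
  refine (hg.tendsto.mono_left nhdsWithin_le_nhds).congr' ?_
  filter_upwards [self_mem_nhdsWithin] with ε hε
  rw [slope_def_module, zero_smul, sub_zero, sub_zero, smul_smul, inv_mul_cancel₀ hε, one_smul]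

def coords : ℂ × ℂ →L[ℝ] Fin 4 → ℂ :=
  ContinuousLinearMap.pi ![ContinuousLinearMap.fst ℝ ℂ ℂ, ContinuousLinearMap.snd ℝ ℂ ℂ,
    conjCLE.toContinuousLinearMap.comp (ContinuousLinearMap.fst ℝ ℂ ℂ),
    conjCLE.toContinuousLinearMap.comp (ContinuousLinearMap.snd ℝ ℂ ℂ)]

@[simp]
theorem coords_apply (q : ℂ × ℂ) : coords q = ![q.1, q.2, conj q.1, conj q.2] := by
  ext j; fin_cases j <;> rfl

/-- Indexed like the coordinates `(z, w, z̄, w̄)` in `coords`, so that `wirtinger i` acts on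
polynomials as `pderiv i` (`wirtinger_polyFn`). -/
def wirtinger : Fin 4 → (ℂ × ℂ → ℂ) → ℂ × ℂ → ℂ := ![wdz, wdw, wdzb, wdwb]

section Wirtinger

variable {f g : ℂ × ℂ → ℂ} {p : ℂ × ℂ}

theorem wirtinger_const (i : Fin 4) (c : ℂ) : wirtinger i (fun _ => c) p = 0 := by
  fin_cases i <;> simp [wirtinger, wdz, wdw, wdzb, wdwb]

theorem wirtinger_add (i : Fin 4) (hf : DifferentiableAt ℝ f p) (hg : DifferentiableAt ℝ g p) :
    wirtinger i (fun q => f q + g q) p = wirtinger i f p + wirtinger i g p := by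
  fin_cases i <;>
    simp only [wirtinger, Fin.zero_eta, Fin.mk_one, Fin.reduceFinMk, Matrix.cons_val, wdz, wdw,
      wdzb, wdwb, fderiv_fun_add hf hg, _root_.add_apply] <;>
    ring

theorem wirtinger_mul (i : Fin 4) (hf : DifferentiableAt ℝ f p) (hg : DifferentiableAt ℝ g p) :
    wirtinger i (fun q => f q * g q) p = wirtinger i f p * g p + f p * wirtinger i g p := by
  fin_cases i <;>
    simp only [wirtinger, Fin.zero_eta, Fin.mk_one, Fin.reduceFinMk, Matrix.cons_val, wdz, wdw,
      wdzb, wdwb, fderiv_fun_mul hf hg, _root_.add_apply, _root_.smul_apply, smul_eq_mul] <;>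
    ring

theorem wirtinger_const_mul (i : Fin 4) (hf : DifferentiableAt ℝ f p) (c : ℂ) :
    wirtinger i (fun q => c * f q) p = c * wirtinger i f p := by
  rw [wirtinger_mul i (differentiableAt_const c) hf, wirtinger_const, zero_mul, zero_add]

theorem wirtinger_add_const_mul (i : Fin 4) (hf : Differentiable ℝ f) (hg : Differentiable ℝ g)
    (c : ℂ) :
    wirtinger i (fun q => f q + c * g q) = fun q => wirtinger i f q + c * wirtinger i g q := by
  ext q
  rw [wirtinger_add i (hf q) (hg.const_mul c q), wirtinger_const_mul i (hg q)]

theorem ContDiff.wirtinger (i : Fin 4) (hf : ContDiff ℝ ∞ f) : ContDiff ℝ ∞ (wirtinger i f) := by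
  have hf' := hf.fderiv_right (m := ∞) le_rfl
  fin_cases i <;>
    simp only [_root_.wirtinger, Fin.zero_eta, Fin.mk_one, Fin.reduceFinMk, Matrix.cons_val] <;>
    (first | unfold wdz | unfold wdw | unfold wdzb | unfold wdwb) <;>
    fun_prop

theorem Lbar_const_mul (ρ : ℂ × ℂ → ℂ) (hf : Differentiable ℝ f) (c : ℂ) :
    Lbar ρ (fun q => c * f q) = fun q => c * Lbar ρ f q := by
  ext q
  simp only [Lbar]
  rw [show wdzb (fun q => c * f q) q = c * wdzb f q from wirtinger_const_mul 2 (hf q) c,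
    show wdwb (fun q => c * f q) q = c * wdwb f q from wirtinger_const_mul 3 (hf q) c]
  ring

theorem iterate_Lbar_const_mul (ρ : ℂ × ℂ → ℂ) (hf : ∀ j, Differentiable ℝ ((Lbar ρ)^[j] f))
    (c : ℂ) (j : ℕ) : (Lbar ρ)^[j] (fun q => c * f q) = fun q => c * (Lbar ρ)^[j] f q := by
  induction j with
  | zero => rfl
  | succ j ih =>
    rw [Function.iterate_succ_apply', ih, Lbar_const_mul ρ (hf j),
      ← Function.iterate_succ_apply' (Lbar ρ)]

end Wirtinger

def polyFn (P : MvPolynomial (Fin 4) ℂ) (q : ℂ × ℂ) : ℂ := eval (coords q) P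

section PolyFn

@[simp]
theorem polyFn_C (a : ℂ) : polyFn (C a) = fun _ => a := by
  ext; simp [polyFn]

theorem polyFn_X (j : Fin 4) : polyFn (X j) = (ContinuousLinearMap.proj j).comp coords := by
  ext; simp [polyFn]

theorem polyFn_add (P Q : MvPolynomial (Fin 4) ℂ) :
    polyFn (P + Q) = fun q => polyFn P q + polyFn Q q := by
  ext; simp [polyFn]

theorem polyFn_mul (P Q : MvPolynomial (Fin 4) ℂ) :
    polyFn (P * Q) = fun q => polyFn P q * polyFn Q q := by
  ext; simp [polyFn]

theorem contDiff_polyFn (P : MvPolynomial (Fin 4) ℂ) : ContDiff ℝ ∞ (polyFn P) := by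
  induction P using MvPolynomial.induction_on with
  | C a => rw [polyFn_C]; exact contDiff_const
  | add P Q hP hQ => rw [polyFn_add]; exact hP.add hQ
  | mul_X P j hP =>
    rw [polyFn_mul]
    exact hP.mul (polyFn_X j ▸ ContinuousLinearMap.contDiff _)

theorem wirtinger_polyFn_X (i j : Fin 4) (p : ℂ × ℂ) :
    wirtinger i (polyFn (X j)) p = polyFn (pderiv i (X j)) p := by
  fin_cases i <;> fin_cases j <;>
    simp [wirtinger, wdz, wdw, wdzb, wdwb, polyFn_X, pderiv_X, polyFn]

theorem wirtinger_polyFn (i : Fin 4) (P : MvPolynomial (Fin 4) ℂ) :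
    wirtinger i (polyFn P) = polyFn (pderiv i P) := by
  induction P using MvPolynomial.induction_on with
  | C a => ext p; simp [wirtinger_const, polyFn]
  | add P Q hP hQ =>
    ext p
    rw [polyFn_add, wirtinger_add i ((contDiff_polyFn P).differentiable (by simp) p)
      ((contDiff_polyFn Q).differentiable (by simp) p), hP, hQ, map_add, polyFn_add]
  | mul_X P j hP =>
    ext p
    rw [polyFn_mul, wirtinger_mul i ((contDiff_polyFn P).differentiable (by simp) p)
      ((contDiff_polyFn (X j)).differentiable (by simp) p), hP, wirtinger_polyFn_X,
      Derivation.leibniz, polyFn_add]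
    simp only [polyFn, map_mul, smul_eq_mul]
    ring

end PolyFn

def lbar0Poly : Derivation ℂ (MvPolynomial (Fin 4) ℂ) (MvPolynomial (Fin 4) ℂ) :=
  -(X 1 : MvPolynomial (Fin 4) ℂ) • pderiv (R := ℂ) 2 + (X 0 : MvPolynomial (Fin 4) ℂ) • pderiv 3

@[simp]
theorem lbar0Poly_X (i : Fin 4) : lbar0Poly (X i) = ![0, 0, -X 1, X 0] i := by
  fin_cases i <;> simp [lbar0Poly, pderiv_X]

theorem Lbar0_polyFn (P : MvPolynomial (Fin 4) ℂ) : Lbar0 (polyFn P) = polyFn (lbar0Poly P) := by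
  have h2 : wdzb (polyFn P) = polyFn (pderiv 2 P) := wirtinger_polyFn 2 P
  have h3 : wdwb (polyFn P) = polyFn (pderiv 3 P) := wirtinger_polyFn 3 P
  ext p
  simp [Lbar0, lbar0Poly, h2, h3, polyFn]

section Sphere

def rho0Poly : MvPolynomial (Fin 4) ℂ := -1 + X 0 * X 2 + X 1 * X 3

theorem polyFn_rho0Poly : polyFn rho0Poly = rho0 := by
  ext q; simp [polyFn, rho0Poly, rho0]

theorem contDiff_rho0 : ContDiff ℝ ∞ rho0 :=
  polyFn_rho0Poly ▸ contDiff_polyFn rho0Poly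

theorem wirtinger_rho0 (i : Fin 4) : wirtinger i rho0 = polyFn (pderiv i rho0Poly) := by
  rw [← polyFn_rho0Poly, wirtinger_polyFn]

theorem wdz_rho0 : wdz rho0 = polyFn (X 2) :=
  (wirtinger_rho0 0).trans (by simp [rho0Poly, pderiv_X])

theorem wdw_rho0 : wdw rho0 = polyFn (X 3) :=
  (wirtinger_rho0 1).trans (by simp [rho0Poly, pderiv_X])

theorem wdzb_rho0 : wdzb rho0 = polyFn (X 0) :=
  (wirtinger_rho0 2).trans (by simp [rho0Poly, pderiv_X])

theorem wdwb_rho0 : wdwb rho0 = polyFn (X 1) :=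
  (wirtinger_rho0 3).trans (by simp [rho0Poly, pderiv_X])

theorem Lbar_rho0 : Lbar rho0 = Lbar0 := by
  ext f p; simp [Lbar, Lbar0, wdzb_rho0, wdwb_rho0, polyFn]

theorem iterate_Lbar_rho0_polyFn (j : ℕ) (P : MvPolynomial (Fin 4) ℂ) :
    (Lbar rho0)^[j] (polyFn P) = polyFn (lbar0Poly^[j] P) := by
  rw [Lbar_rho0]
  exact ((Function.Semiconj.iterate_right (fun P => (Lbar0_polyFn P).symm) j) P).symm

theorem rowA_rho0 {n k : ℕ} (hk : k ≤ n) : rowA rho0 n k = polyFn (X 2 ^ k * X 3 ^ (n - k)) := by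
  ext q; simp [rowA, hk, wdz_rho0, wdw_rho0, polyFn]

theorem matA_submatrix_castLE (ρ : ℂ × ℂ → ℂ) {n : ℕ} (h : n + 1 ≤ 2 * n - 1) (p : ℂ × ℂ) :
    (matA ρ n p).submatrix (Fin.castLE h) (Fin.castLE h) = matD ρ n p := by
  ext k j
  simp [matA, matD, rowA, Nat.lt_succ_iff.mp k.2]

theorem matD_rho0_apply (n : ℕ) (p : ℂ × ℂ) (k j : Fin (n + 1)) :
    matD rho0 n p k j = polyFn (lbar0Poly^[j] (X 2 ^ (k : ℕ) * X 3 ^ (n - k))) p := by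
  rw [← iterate_Lbar_rho0_polyFn, ← rowA_rho0 (Nat.lt_succ_iff.mp k.2)]
  simp only [matD, rowA, Nat.lt_succ_iff.mp k.2, if_true]

theorem matD_rho0_three (p : ℂ × ℂ) :
    matD rho0 3 p =
      let z := p.1; let w := p.2; let a := conj p.1; let b := conj p.2
      !![b ^ 3, 3 * z * b ^ 2, 6 * z ^ 2 * b, 6 * z ^ 3;
         a * b ^ 2, 2 * z * a * b - w * b ^ 2, 2 * z ^ 2 * a - 4 * z * w * b, -6 * z ^ 2 * w;
         a ^ 2 * b, z * a ^ 2 - 2 * w * a * b, 2 * w ^ 2 * b - 4 * z * w * a, 6 * z * w ^ 2;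
         a ^ 3, -3 * w * a ^ 2, 6 * w ^ 2 * a, -6 * w ^ 3] := by
  ext k j
  fin_cases k <;> fin_cases j <;>
    simp [matD_rho0_apply, Function.iterate_succ_apply', Derivation.leibniz, pow_succ, polyFn] <;>
    ring

theorem det_matD_rho0 (p : ℂ × ℂ) :
    (matD rho0 3 p).det = 12 * (p.1 * conj p.1 + p.2 * conj p.2) ^ 6 := by
  rw [matD_rho0_three]
  simp [Matrix.det_succ_row_zero, Fin.sum_univ_succ, Fin.succAbove]
  ring

theorem matA_rho0_castSucc_last (p : ℂ × ℂ) (k : Fin 4) :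
    matA rho0 3 p k.castSucc (Fin.last 4) = 0 := by
  change (Lbar rho0)^[4] (rowA rho0 3 k) p = 0
  rw [rowA_rho0 (Nat.lt_succ_iff.mp k.2), iterate_Lbar_rho0_polyFn]
  fin_cases k <;> simp [Function.iterate_succ_apply', Derivation.leibniz, pow_succ, polyFn]

end Sphere

/-- `hessLL ρ R` is `R_{Z²}(L, L)` for the operator `L` of `ρ`. -/
def hessLL (ρ R : ℂ × ℂ → ℂ) : ℂ × ℂ → ℂ :=
  fun p => wdz (wdz R) p * (wdw ρ p) ^ 2
    - 2 * wdw (wdz R) p * wdz ρ p * wdw ρ p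
    + wdw (wdw R) p * (wdz ρ p) ^ 2

theorem rhoZ2LL_eq_hessLL (ρ : ℂ × ℂ → ℂ) : rhoZ2LL ρ = hessLL ρ ρ := rfl

theorem rowA_three_four (ρ : ℂ × ℂ → ℂ) : rowA ρ 3 4 = rhoZ2LL ρ := by
  ext; simp [rowA]

theorem hessLL_rho0 (R : ℂ × ℂ → ℂ) :
    hessLL rho0 R = fun p => (conj p.2) ^ 2 * wdz (wdz R) p
      - 2 * conj p.1 * conj p.2 * wdw (wdz R) p + (conj p.1) ^ 2 * wdw (wdw R) p := by
  ext p; simp [hessLL, wdz_rho0, wdw_rho0, polyFn]; ring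

theorem Q0_eq_iterate_Lbar_rho0 (R : ℂ × ℂ → ℂ) : Q0 R = (Lbar rho0)^[4] (hessLL rho0 R) := by
  rw [Lbar_rho0, hessLL_rho0, Q0]

def JointlySmooth (F : ℝ → ℂ × ℂ → ℂ) : Prop := ContDiff ℝ ∞ (Function.uncurry F)

namespace JointlySmooth

variable {F G ρ : ℝ → ℂ × ℂ → ℂ}

theorem of_contDiff {f : ℂ × ℂ → ℂ} (hf : ContDiff ℝ ∞ f) : JointlySmooth fun _ => f :=
  hf.comp contDiff_snd

theorem contDiff (hF : JointlySmooth F) (ε : ℝ) : ContDiff ℝ ∞ (F ε) :=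
  hF.comp (contDiff_const.prodMk contDiff_id)

theorem continuous_apply (hF : JointlySmooth F) (q : ℂ × ℂ) : Continuous fun ε => F ε q :=
  hF.continuous.comp (continuous_id.prodMk continuous_const)

theorem add (hF : JointlySmooth F) (hG : JointlySmooth G) :
    JointlySmooth fun ε q => F ε q + G ε q :=
  ContDiff.add hF hG

theorem sub (hF : JointlySmooth F) (hG : JointlySmooth G) :
    JointlySmooth fun ε q => F ε q - G ε q :=
  ContDiff.sub hF hG

theorem mul (hF : JointlySmooth F) (hG : JointlySmooth G) :
    JointlySmooth fun ε q => F ε q * G ε q :=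
  ContDiff.mul hF hG

theorem const_mul (hF : JointlySmooth F) (c : ℂ) : JointlySmooth fun ε q => c * F ε q :=
  contDiff_const.mul hF

theorem neg (hF : JointlySmooth F) : JointlySmooth fun ε q => -F ε q :=
  ContDiff.neg hF

theorem pow (hF : JointlySmooth F) (k : ℕ) : JointlySmooth fun ε q => F ε q ^ k :=
  ContDiff.pow hF k

theorem wirtinger (hF : JointlySmooth F) (i : Fin 4) :
    JointlySmooth fun ε => _root_.wirtinger i (F ε) := by
  have hD : ContDiff ℝ ∞ fun x : ℝ × (ℂ × ℂ) => fderiv ℝ (F x.1) x.2 :=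
    ContDiff.fderiv (f := fun x : ℝ × (ℂ × ℂ) => F x.1)
      (hF.comp (contDiff_fst.fst.prodMk contDiff_snd)) contDiff_snd le_rfl
  unfold JointlySmooth Function.uncurry
  fin_cases i <;>
    simp only [_root_.wirtinger, Fin.zero_eta, Fin.mk_one, Fin.reduceFinMk, Matrix.cons_val] <;>
    (first | unfold wdz | unfold wdw | unfold wdzb | unfold wdwb) <;>
    fun_prop

theorem lbar (hρ : JointlySmooth ρ) (hF : JointlySmooth F) :
    JointlySmooth fun ε => Lbar (ρ ε) (F ε) :=
  ((hρ.wirtinger 3).neg.mul (hF.wirtinger 2)).add ((hρ.wirtinger 2).mul (hF.wirtinger 3))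

theorem iterate_lbar (hρ : JointlySmooth ρ) (hF : JointlySmooth F) (j : ℕ) :
    JointlySmooth fun ε => (Lbar (ρ ε))^[j] (F ε) := by
  induction j with
  | zero => exact hF
  | succ j ih => simpa only [Function.iterate_succ_apply'] using hρ.lbar ih

theorem hessLL (hρ : JointlySmooth ρ) (hR : JointlySmooth F) :
    JointlySmooth fun ε => _root_.hessLL (ρ ε) (F ε) := by
  have hz : JointlySmooth fun ε => wdz (ρ ε) := hρ.wirtinger 0
  have hw : JointlySmooth fun ε => wdw (ρ ε) := hρ.wirtinger 1
  have hRz : JointlySmooth fun ε => wdz (F ε) := hR.wirtinger 0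
  have hRzz : JointlySmooth fun ε => wdz (wdz (F ε)) := hRz.wirtinger 0
  have hRzw : JointlySmooth fun ε => wdw (wdz (F ε)) := hRz.wirtinger 1
  have hRww : JointlySmooth fun ε => wdw (wdw (F ε)) := (hR.wirtinger 1).wirtinger 1
  exact ((hRzz.mul (hw.pow 2)).sub (((hRzw.const_mul 2).mul hz).mul hw)).add
    (hRww.mul (hz.pow 2))

theorem rowA (hρ : JointlySmooth ρ) (n i : ℕ) :
    JointlySmooth fun ε => _root_.rowA (ρ ε) n i := by
  have hz : JointlySmooth fun ε => wdz (ρ ε) := hρ.wirtinger 0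
  have hw : JointlySmooth fun ε => wdw (ρ ε) := hρ.wirtinger 1
  by_cases hi : i ≤ n
  · simpa only [_root_.rowA, hi, if_true] using (hz.pow i).mul (hw.pow (n - i))
  · simpa only [_root_.rowA, hi, if_false, rhoZ2LL_eq_hessLL] using
      ((hz.pow _).mul (hw.pow _)).mul (hρ.hessLL hρ)

end JointlySmooth

section Perturbation

variable {ρ' : ℂ × ℂ → ℂ}

def perturbedSphere (ρ' : ℂ × ℂ → ℂ) (ε : ℝ) : ℂ × ℂ → ℂ := fun Z => rho0 Z + (ε : ℂ) * ρ' Z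

theorem perturbedSphere_zero : perturbedSphere ρ' 0 = rho0 := by
  ext Z; simp [perturbedSphere]

theorem jointlySmooth_perturbedSphere (hs : ContDiff ℝ ∞ ρ') :
    JointlySmooth (perturbedSphere ρ') :=
  (contDiff_rho0.comp contDiff_snd).add
    ((Complex.ofRealCLM.contDiff.comp contDiff_fst).mul (hs.comp contDiff_snd))

theorem wirtinger_wirtinger_perturbedSphere (hs : ContDiff ℝ ∞ ρ') (ε : ℝ) (i j : Fin 4) :
    wirtinger i (wirtinger j (perturbedSphere ρ' ε)) =
      fun q => polyFn (pderiv i (pderiv j rho0Poly)) q + ε * wirtinger i (wirtinger j ρ') q := by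
  have hd : ∀ {f : ℂ × ℂ → ℂ}, ContDiff ℝ ∞ f → Differentiable ℝ f :=
    fun hf => hf.differentiable (by simp)
  unfold perturbedSphere
  rw [wirtinger_add_const_mul j (hd contDiff_rho0) (hd hs), wirtinger_rho0,
    wirtinger_add_const_mul i (hd (contDiff_polyFn _)) (hd (hs.wirtinger j)), wirtinger_polyFn]

theorem rhoZ2LL_perturbedSphere (hs : ContDiff ℝ ∞ ρ') (ε : ℝ) :
    rhoZ2LL (perturbedSphere ρ' ε) = fun q => ε * hessLL (perturbedSphere ρ' ε) ρ' q := by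
  have h := wirtinger_wirtinger_perturbedSphere hs ε
  have hzz : wdz (wdz (perturbedSphere ρ' ε)) = fun q => ε * wdz (wdz ρ') q :=
    (h 0 0).trans (by ext; simp [wirtinger, rho0Poly, pderiv_X, polyFn])
  have hzw : wdw (wdz (perturbedSphere ρ' ε)) = fun q => ε * wdw (wdz ρ') q :=
    (h 1 0).trans (by ext; simp [wirtinger, rho0Poly, pderiv_X, polyFn])
  have hww : wdw (wdw (perturbedSphere ρ' ε)) = fun q => ε * wdw (wdw ρ') q :=
    (h 1 1).trans (by ext; simp [wirtinger, rho0Poly, pderiv_X, polyFn])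
  ext q
  simp only [rhoZ2LL, hessLL, hzz, hzw, hww]
  ring

theorem matA_perturbedSphere_last (hs : ContDiff ℝ ∞ ρ') (ε : ℝ) (p : ℂ × ℂ) :
    matA (perturbedSphere ρ' ε) 3 p (Fin.last 4) = (ε : ℂ) • fun j : Fin 5 =>
      (Lbar (perturbedSphere ρ' ε))^[j] (hessLL (perturbedSphere ρ' ε) ρ') p := by
  have hρ := jointlySmooth_perturbedSphere hs
  have hS := hρ.hessLL (.of_contDiff hs)
  ext j
  change (Lbar (perturbedSphere ρ' ε))^[(j : ℕ)] (rowA (perturbedSphere ρ' ε) 3 4) p = ε * _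
  rw [rowA_three_four, rhoZ2LL_perturbedSphere hs, iterate_Lbar_const_mul _
    (fun j => ((hρ.iterate_lbar hS j).contDiff ε).differentiable (by simp))]

/-- `A₃(ρ^ε)` with its last row divided by `ε` (`matA_perturbedSphere_last`). -/
def reducedMatA (ρ' : ℂ × ℂ → ℂ) (p : ℂ × ℂ) (ε : ℝ) : Matrix (Fin 5) (Fin 5) ℂ :=
  (matA (perturbedSphere ρ' ε) 3 p : Matrix (Fin 5) (Fin 5) ℂ).updateRow (Fin.last 4)
    fun j : Fin 5 => (Lbar (perturbedSphere ρ' ε))^[j] (hessLL (perturbedSphere ρ' ε) ρ') p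

theorem det_matA_perturbedSphere (hs : ContDiff ℝ ∞ ρ') (ε : ℝ) (p : ℂ × ℂ) :
    (matA (perturbedSphere ρ' ε) 3 p).det = ε • (reducedMatA ρ' p ε).det := by
  rw [Complex.real_smul, reducedMatA, ← det_updateRow_smul, ← matA_perturbedSphere_last hs,
    updateRow_eq_self]

theorem continuous_det_reducedMatA (hs : ContDiff ℝ ∞ ρ') (p : ℂ × ℂ) :
    Continuous fun ε => (reducedMatA ρ' p ε).det := by
  have hρ := jointlySmooth_perturbedSphere hs
  have hS := hρ.hessLL (.of_contDiff hs)
  refine Continuous.matrix_det (Continuous.matrix_updateRow _ ?_ ?_)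
  · exact continuous_matrix fun i j => (hρ.iterate_lbar (hρ.rowA 3 i) j).continuous_apply p
  · exact continuous_pi fun j => (hρ.iterate_lbar hS j).continuous_apply p

theorem det_reducedMatA_zero (p : ℂ × ℂ) :
    (reducedMatA ρ' p 0).det = (matD rho0 3 p).det * Q0 ρ' p := by
  rw [reducedMatA, perturbedSphere_zero, det_updateRow_last_of_col_eq_zero _ _ (matA_rho0_castSucc_last p),
    Q0_eq_iterate_Lbar_rho0, ← matA_submatrix_castLE rho0 (by norm_num) p]
  rfl

end Perturbation

theorem detA3_sphere_perturbation_general (ρ' : ℂ × ℂ → ℂ)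
    (hs : ContDiff ℝ (⊤ : ℕ∞) ρ') (p : ℂ × ℂ) :
    (matA rho0 3 p).det = 0 ∧
      HasDerivAt (fun ε : ℝ => (matA (fun Z => rho0 Z + (ε : ℂ) * ρ' Z) 3 p).det)
        ((matD rho0 3 p).det * Q0 ρ' p) 0 ∧
      (rho0 p = 0 → (matD rho0 3 p).det ≠ 0) := by
  have hA := fun ε => det_matA_perturbedSphere hs ε p
  refine ⟨?_, ?_, fun hp => ?_⟩
  · simpa [perturbedSphere_zero] using hA 0
  · rw [← det_reducedMatA_zero]
    exact funext hA ▸ hasDerivAt_smul_of_continuousAt (continuous_det_reducedMatA hs p).continuousAt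
  · have hsphere : p.1 * conj p.1 + p.2 * conj p.2 = 1 := by
      unfold rho0 at hp
      linear_combination hp
    simp [det_matD_rho0, hsphere]

/-- **Proposition 5.1**: for perturbations `ρ^ε = ρ⁰ + ε ρ'` of the sphere, at every `p`:
(a) `det A₃(ρ⁰)(p) = 0`; (b) `ε ↦ det A₃(ρ^ε)(p)` is differentiable at `ε = 0` with
derivative `det D₃(ρ⁰)(p) · Q⁰(ρ')(p)`; and (c) `det D₃(ρ⁰)` does not vanish at any point of
the unit sphere `{ρ⁰ = 0}`. -/
theorem detA3_sphere_perturbation (ρ' : ℂ × ℂ → ℂ)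
    (hs : ContDiff ℝ (⊤ : ℕ∞) ρ') (hreal : ∀ q, (ρ' q).im = 0) (p : ℂ × ℂ) :
    (matA rho0 3 p).det = 0 ∧
      HasDerivAt (fun ε : ℝ => (matA (fun Z => rho0 Z + (ε : ℂ) * ρ' Z) 3 p).det)
        ((matD rho0 3 p).det * Q0 ρ' p) 0 ∧
      (rho0 p = 0 → (matD rho0 3 p).det ≠ 0) :=
  detA3_sphere_perturbation_general ρ' hs p
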